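/- arXiv:2002.04017 — 2 statements merged into one kernel-verified Lean document; each statement's English description precedes it below -/
import Mathlib

section
/- Let M and N be nonempty sets, let ε ≥ 0, and let V, V̂ : M × N → ℝ be bounded functions such that |V̂(μ, ν) − V(μ, ν)| ≤ ε/2 for all (μ, ν) ∈ M × N. Suppose (μ̂, ν̂) ∈ M × N satisfies sup_{μ∈M} V̂(μ, ν̂) = inf_{ν∈N} V̂(μ̂, ν). Then sup_{μ∈M} V(μ, ν̂) − inf_{ν∈N} V(μ̂, ν) ≤ ε. -/
/-- Core of the PAC bound for VI-Explore: if `V̂` is uniformly ε/2-close to `V`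
over all policy pairs, then any Nash equilibrium `(μ̂, ν̂)` of `V̂` (where the
best-response upper and lower values coincide) is an ε-approximate Nash
equilibrium of `V`. -/
theorem stmt_6 {M N : Type*} [Nonempty M] [Nonempty N] (ε : ℝ) (hε : 0 ≤ ε)
    (V Vhat : M × N → ℝ)
    (hVb : ∃ C, ∀ p, |V p| ≤ C) (hVhatb : ∃ C, ∀ p, |Vhat p| ≤ C)
    (hclose : ∀ μ ν, |Vhat (μ, ν) - V (μ, ν)| ≤ ε / 2)
    (μhat : M) (νhat : N)
    (hNash : (⨆ μ, Vhat (μ, νhat)) = ⨅ ν, Vhat (μhat, ν)) :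
    (⨆ μ, V (μ, νhat)) - (⨅ ν, V (μhat, ν)) ≤ ε := by
  obtain ⟨C, hC⟩ := hVb
  obtain ⟨D, hD⟩ := hVhatb
  have bddAboveVhat : BddAbove (Set.range fun μ => Vhat (μ, νhat)) :=
    ⟨D, by rintro _ ⟨μ, rfl⟩; exact (abs_le.1 (hD _)).2⟩
  have bddBelowVhat : BddBelow (Set.range fun ν => Vhat (μhat, ν)) :=
    ⟨-D, by rintro _ ⟨ν, rfl⟩; exact (abs_le.1 (hD _)).1⟩
  have bddBelowV : BddBelow (Set.range fun ν => V (μhat, ν)) :=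
    ⟨-C, by rintro _ ⟨ν, rfl⟩; exact (abs_le.1 (hC _)).1⟩
  have h1 : (⨆ μ, V (μ, νhat)) ≤ (⨆ μ, Vhat (μ, νhat)) + ε / 2 := by
    apply ciSup_le
    intro μ
    have := (abs_le.1 (hclose μ νhat)).1
    have h2 : Vhat (μ, νhat) ≤ ⨆ μ, Vhat (μ, νhat) := le_ciSup bddAboveVhat μ
    linarith
  have h2 : (⨅ ν, Vhat (μhat, ν)) ≤ (⨅ ν, V (μhat, ν)) + ε / 2 := by
    have : ∀ ν, (⨅ ν, Vhat (μhat, ν)) ≤ V (μhat, ν) + ε / 2 := by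
      intro ν
      have := (abs_le.1 (hclose μhat ν)).2
      have h3 : (⨅ ν, Vhat (μhat, ν)) ≤ Vhat (μhat, ν) := ciInf_le bddBelowVhat ν
      linarith
    have := le_ciInf (f := fun ν => V (μhat, ν) + ε / 2) this
    calc (⨅ ν, Vhat (μhat, ν)) ≤ ⨅ ν, (V (μhat, ν) + ε / 2) := this
      _ = (⨅ ν, V (μhat, ν)) + ε / 2 := by
          exact (ciInf_add bddBelowV (ε / 2)).symm
  linarith [h1, h2, hNash]
end

section
/- Consider a finite-horizon Markov decision process with finite nonempty state set S, finite nonempty action set A, horizon H ≥ 1, transition kernels P_h : S × A → (S → ℝ) with P_h(s'|s,a) ≥ 0 and ∑_{s'} P_h(s'|s,a) = 1, and rewards r_h : S × A → [0,1], for h = 1, …, H. For a policy π = (π_h)_{h∈[H]} with π_h(·|s) ∈ Δ_A, define value functions by the backward recursion V_{H+1}^π(s) = 0 and V_h^π(s) = ∑_a π_h(a|s)·(r_h(s,a) + ∑_{s'} P_h(s'|s,a)·V_{h+1}^π(s')). Let (P̂, r̂) be another transition-reward pair with r̂_h(s,a) ∈ [0,1], ∑_{s'} P̂_h(s'|s,a)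 = 1, P̂_h(s'|s,a) ≥ 0, and suppose for all (h, s, a): |r̂_h(s,a) − r_h(s,a)| ≤ ε_r and ∑_{s'} |P̂_h(s'|s,a) − P_h(s'|s,a)| ≤ ε_P. Let V̂^π denote the value functions of (P̂, r̂) under the same policy π, defined by the same recursion. Then for every state s: |V̂_1^π(s) − V_1^π(s)| ≤ H·ε_r + H²·ε_P. -/
open Finset
noncomputable def mdpValue {S A : Type*} [Fintype S] [Fintype A] (H : ℕ)
    (P : ℕ → S → A → S → ℝ) (r : ℕ → S → A → ℝ) (π : ℕ → S → A → ℝ) :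
    ℕ → S → ℝ
  | h => fun s =>
    if _ : h < H + 1 then
      ∑ a, π h s a * (r h s a + ∑ s', P h s a s' * mdpValue H P r π (h + 1) s')
    else 0
  termination_by h => H + 1 - h
  decreasing_by omega

lemma mdpValue_pos {S A : Type*} [Fintype S] [Fintype A] (H : ℕ)
    (P : ℕ → S → A → S → ℝ) (r : ℕ → S → A → ℝ) (π : ℕ → S → A → ℝ)
    {h : ℕ} (hh : h < H + 1) (s : S) :
    mdpValue H P r π h s
      = ∑ a, π h s a * (r h s a + ∑ s', P h s a s' * mdpValue H P r π (h + 1) s') := by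
  rw [mdpValue]; dsimp only; rw [dif_pos hh]

lemma mdpValue_zero {S A : Type*} [Fintype S] [Fintype A] (H : ℕ)
    (P : ℕ → S → A → S → ℝ) (r : ℕ → S → A → ℝ) (π : ℕ → S → A → ℝ)
    {h : ℕ} (hh : ¬ h < H + 1) (s : S) :
    mdpValue H P r π h s = 0 := by
  rw [mdpValue]; dsimp only; rw [dif_neg hh]

lemma mdpValue_bounds {S A : Type*} [Fintype S] [Fintype A] (H : ℕ)
    (P : ℕ → S → A → S → ℝ) (r : ℕ → S → A → ℝ) (π : ℕ → S → A → ℝ)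
    (hP : ∀ h, 1 ≤ h → h ≤ H → ∀ s a, (∀ s', 0 ≤ P h s a s') ∧ ∑ s', P h s a s' = 1)
    (hr : ∀ h, 1 ≤ h → h ≤ H → ∀ s a, 0 ≤ r h s a ∧ r h s a ≤ 1)
    (hπ : ∀ h, 1 ≤ h → h ≤ H → ∀ s, (∀ a, 0 ≤ π h s a) ∧ ∑ a, π h s a = 1) :
    ∀ k h, H + 1 = h + k → 1 ≤ h → ∀ s,
      0 ≤ mdpValue H P r π h s ∧ mdpValue H P r π h s ≤ (k : ℝ) := by
  intro k
  induction k with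
  | zero =>
      intro h hk h1 s
      rw [mdpValue_zero H P r π (by omega) s]
      norm_num
  | succ k ih =>
      intro h hk h1 s
      have hhH : h ≤ H := by omega
      rw [mdpValue_pos H P r π (by omega) s]
      have hrec := ih (h+1) (by omega) (by omega)
      have hπs := hπ h h1 hhH s
      constructor
      · apply Finset.sum_nonneg
        intro a _
        apply mul_nonneg (hπs.1 a)
        have := hr h h1 hhH s a
        have hPa := hP h h1 hhH s a
        have : (0:ℝ) ≤ ∑ s', P h s a s' * mdpValue H P r π (h + 1) s' :=
          Finset.sum_nonneg fun s' _ => mul_nonneg (hPa.1 s') (hrec s').1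
        linarith [(hr h h1 hhH s a).1]
      · calc ∑ a, π h s a * (r h s a + ∑ s', P h s a s' * mdpValue H P r π (h + 1) s')
            ≤ ∑ a, π h s a * (1 + k) := by
              apply Finset.sum_le_sum
              intro a _
              apply mul_le_mul_of_nonneg_left _ (hπs.1 a)
              have hPa := hP h h1 hhH s a
              have h2 : ∑ s', P h s a s' * mdpValue H P r π (h + 1) s' ≤ ∑ s', P h s a s' * k := by
                apply Finset.sum_le_sum
                intro s' _
                exact mul_le_mul_of_nonneg_left (hrec s').2 (hPa.1 s')
              rw [← Finset.sum_mul, hPa.2, one_mul] at h2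
              linarith [(hr h h1 hhH s a).2]
          _ = 1 + k := by rw [← Finset.sum_mul, hπs.2, one_mul]
          _ = ((k+1 : ℕ) : ℝ) := by push_cast; ring

/-- Simulation lemma: if the estimated rewards are `ε_r`-close in absolute value
and the estimated transitions are `ε_P`-close in total variation, uniformly over
steps `h ∈ [H]` and state-action pairs, then the value of any fixed policy in the
estimated model is within `H·ε_r + H²·ε_P` of its value in the true model. -/
theorem stmt_7 {S A : Type*} [Fintype S] [Nonempty S] [Fintype A] [Nonempty A]
    (H : ℕ) (hH : 1 ≤ H)
    (P Phat : ℕ → S → A → S → ℝ) (r rhat : ℕ → S → A → ℝ) (π : ℕ → S → A → ℝ)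
    (hP : ∀ h, 1 ≤ h → h ≤ H → ∀ s a, (∀ s', 0 ≤ P h s a s') ∧ ∑ s', P h s a s' = 1)
    (hPhat : ∀ h, 1 ≤ h → h ≤ H → ∀ s a,
      (∀ s', 0 ≤ Phat h s a s') ∧ ∑ s', Phat h s a s' = 1)
    (hr : ∀ h, 1 ≤ h → h ≤ H → ∀ s a, 0 ≤ r h s a ∧ r h s a ≤ 1)
    (hrhat : ∀ h, 1 ≤ h → h ≤ H → ∀ s a, 0 ≤ rhat h s a ∧ rhat h s a ≤ 1)
    (hπ : ∀ h, 1 ≤ h → h ≤ H → ∀ s, (∀ a, 0 ≤ π h s a) ∧ ∑ a, π h s a = 1)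
    (εr εP : ℝ)
    (hεr : ∀ h, 1 ≤ h → h ≤ H → ∀ s a, |rhat h s a - r h s a| ≤ εr)
    (hεP : ∀ h, 1 ≤ h → h ≤ H → ∀ s a, ∑ s', |Phat h s a s' - P h s a s'| ≤ εP) :
    ∀ s, |mdpValue H Phat rhat π 1 s - mdpValue H P r π 1 s| ≤
      (H : ℝ) * εr + (H : ℝ) ^ 2 * εP := by
  obtain ⟨s0⟩ := (inferInstance : Nonempty S)
  obtain ⟨a0⟩ := (inferInstance : Nonempty A)
  have hεr0 : 0 ≤ εr := le_trans (abs_nonneg _) (hεr 1 le_rfl hH s0 a0)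
  have hεP0 : 0 ≤ εP :=
    le_trans (Finset.sum_nonneg fun s' _ => abs_nonneg _) (hεP 1 le_rfl hH s0 a0)
  have key : ∀ k h, H + 1 = h + k → 1 ≤ h → ∀ s,
      |mdpValue H Phat rhat π h s - mdpValue H P r π h s|
        ≤ (k : ℝ) * εr + (k : ℝ) * H * εP := by
    intro k
    induction k with
    | zero =>
        intro h hk h1 s
        rw [mdpValue_zero H Phat rhat π (by omega), mdpValue_zero H P r π (by omega)]
        norm_num
    | succ k ih =>
        intro h hk h1 s
        have hhH : h ≤ H := by omega
        have hkH : (k : ℝ) ≤ H := by exact_mod_cast (by omega : k ≤ H)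
        have hrec := ih (h+1) (by omega) (by omega)
        have hbhat := mdpValue_bounds H Phat rhat π hPhat hrhat hπ k (h+1) (by omega) (by omega)
        have hπs := hπ h h1 hhH s
        rw [mdpValue_pos H Phat rhat π (by omega), mdpValue_pos H P r π (by omega)]
        rw [← Finset.sum_sub_distrib]
        calc |∑ a, (π h s a * (rhat h s a + ∑ s', Phat h s a s' * mdpValue H Phat rhat π (h + 1) s')
                - π h s a * (r h s a + ∑ s', P h s a s' * mdpValue H P r π (h + 1) s'))|
            ≤ ∑ a, |π h s a * (rhat h s a + ∑ s', Phat h s a s' * mdpValue H Phat rhat π (h + 1) s')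
                - π h s a * (r h s a + ∑ s', P h s a s' * mdpValue H P r π (h + 1) s')| :=
              Finset.abs_sum_le_sum_abs _ _
          _ ≤ ∑ a, π h s a * ((k+1) * εr + (k+1) * H * εP) := by
              apply Finset.sum_le_sum
              intro a _
              rw [← mul_sub, abs_mul, abs_of_nonneg (hπs.1 a)]
              apply mul_le_mul_of_nonneg_left _ (hπs.1 a)
              have hPa := hP h h1 hhH s a
              have hPha := hPhat h h1 hhH s a
              -- bound the transition part
              have hsplit : (∑ s', Phat h s a s' * mdpValue H Phat rhat π (h + 1) s')
                  - ∑ s', P h s a s' * mdpValue H P r π (h + 1) s'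
                  = (∑ s', (Phat h s a s' - P h s a s') * mdpValue H Phat rhat π (h + 1) s')
                    + ∑ s', P h s a s' * (mdpValue H Phat rhat π (h + 1) s' - mdpValue H P r π (h + 1) s') := by
                rw [← Finset.sum_add_distrib, ← Finset.sum_sub_distrib]
                congr 1; ext s'; ring
              have h1b : |∑ s', (Phat h s a s' - P h s a s') * mdpValue H Phat rhat π (h + 1) s'|
                  ≤ εP * k := by
                calc |∑ s', (Phat h s a s' - P h s a s') * mdpValue H Phat rhat π (h + 1) s'|
                    ≤ ∑ s', |Phat h s a s' - P h s a s'| * k := by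
                      refine le_trans (Finset.abs_sum_le_sum_abs _ _) (Finset.sum_le_sum ?_)
                      intro s' _
                      rw [abs_mul]
                      apply mul_le_mul_of_nonneg_left _ (abs_nonneg _)
                      rw [abs_of_nonneg (hbhat s').1]
                      exact (hbhat s').2
                  _ = (∑ s', |Phat h s a s' - P h s a s'|) * k := (Finset.sum_mul _ _ _).symm
                  _ ≤ εP * k := mul_le_mul_of_nonneg_right (hεP h h1 hhH s a) (by positivity)
              have h2b : |∑ s', P h s a s' * (mdpValue H Phat rhat π (h + 1) s' - mdpValue H P r π (h + 1) s')|
                  ≤ k * εr + k * H * εP := by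
                calc |∑ s', P h s a s' * (mdpValue H Phat rhat π (h + 1) s' - mdpValue H P r π (h + 1) s')|
                    ≤ ∑ s', P h s a s' * (k * εr + k * H * εP) := by
                      refine le_trans (Finset.abs_sum_le_sum_abs _ _) (Finset.sum_le_sum ?_)
                      intro s' _
                      rw [abs_mul, abs_of_nonneg (hPa.1 s')]
                      exact mul_le_mul_of_nonneg_left (hrec s') (hPa.1 s')
                  _ = k * εr + k * H * εP := by rw [← Finset.sum_mul, hPa.2, one_mul]
              have hεPk : εP * k ≤ εP * H := mul_le_mul_of_nonneg_left hkH hεP0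
              calc |rhat h s a + (∑ s', Phat h s a s' * mdpValue H Phat rhat π (h + 1) s')
                    - (r h s a + ∑ s', P h s a s' * mdpValue H P r π (h + 1) s')|
                  ≤ |rhat h s a - r h s a|
                    + |(∑ s', Phat h s a s' * mdpValue H Phat rhat π (h + 1) s')
                        - ∑ s', P h s a s' * mdpValue H P r π (h + 1) s'| := by
                    have : rhat h s a + (∑ s', Phat h s a s' * mdpValue H Phat rhat π (h + 1) s')
                        - (r h s a + ∑ s', P h s a s' * mdpValue H P r π (h + 1) s')
                        = (rhat h s a - r h s a)
                          + ((∑ s', Phat h s a s' * mdpValue H Phat rhat π (h + 1) s')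
                            - ∑ s', P h s a s' * mdpValue H P r π (h + 1) s') := by ring
                    rw [this]; exact abs_add_le _ _
                _ ≤ εr + (εP * k + (k * εr + k * H * εP)) := by
                    have := hεr h h1 hhH s a
                    have habs : |(∑ s', Phat h s a s' * mdpValue H Phat rhat π (h + 1) s')
                        - ∑ s', P h s a s' * mdpValue H P r π (h + 1) s'| ≤ εP * k + (k * εr + k * H * εP) := by
                      rw [hsplit]
                      exact le_trans (abs_add_le _ _) (add_le_add h1b h2b)
                    linarith
                _ ≤ (k+1) * εr + (k+1) * H * εP := by nlinarith
          _ = (k+1) * εr + (k+1) * H * εP := by rw [← Finset.sum_mul, hπs.2, one_mul]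
          _ = ((k+1 : ℕ) : ℝ) * εr + ((k+1 : ℕ) : ℝ) * H * εP := by push_cast; ring
  intro s
  have := key H 1 (by omega) le_rfl s
  calc |mdpValue H Phat rhat π 1 s - mdpValue H P r π 1 s| ≤ (H:ℝ) * εr + (H:ℝ) * H * εP := this
    _ = (H : ℝ) * εr + (H : ℝ) ^ 2 * εP := by ring
end
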